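/- arXiv:1809.10263 — 5 statements merged into one kernel-verified Lean document; each statement's English description precedes it below -/
import Mathlib

section
/- For positive integers x, y and positive real numbers z, w such that w - z is a positive integer with w - z ≥ x, the identity ∑_{j=x}^{w-z} C(j,y)·C(w-j,z) = ∑_{i=max(0, x+y+z-w)}^{y} C(x,i)·C(w-x+1, z+y-i+1) holds, where C(a,b) denotes the generalized binomial coefficient Γ(a+1)/(Γ(b+1)Γ(a-b+1)). -/
open SimpleGraph Finset Nat

/-- A set of edges forms a connected (sub)graph: the graph it spans,
induced on its support, is connected. -/
def EdgeSetConnected (V : Type*) (S : Set (Sym2 V)) : Prop :=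
  ((SimpleGraph.fromEdgeSet S).induce (SimpleGraph.fromEdgeSet S).support).Connected

/-- A shelling of a graph `G`: an ordering of its edges such that every
initial segment forms a connected subgraph. -/
def IsShelling {V : Type*} (G : SimpleGraph V)
    (σ : Fin (Nat.card G.edgeSet) ≃ G.edgeSet) : Prop :=
  ∀ k : Fin (Nat.card G.edgeSet),
    EdgeSetConnected V {e | ∃ i, i ≤ k ∧ (σ i : Sym2 V) = e}

/-- The number of shellings of `G`. -/
noncomputable def shellingCount {V : Type*} (G : SimpleGraph V) : ℕ :=
  Nat.card {σ : Fin (Nat.card G.edgeSet) ≃ G.edgeSet // IsShelling G σ}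

/-- The number of shellings of `G` rooted at `v`, i.e. whose first edge is incident to `v`. -/
noncomputable def rootedShellingCount {V : Type*} (G : SimpleGraph V) (v : V) : ℕ :=
  Nat.card {σ : Fin (Nat.card G.edgeSet) ≃ G.edgeSet //
    IsShelling G σ ∧ ∃ h : 0 < Nat.card G.edgeSet, v ∈ (σ ⟨0, h⟩ : Sym2 V)}

/-- The number of vertices of the subtree rooted at `u` when the tree `G` is
rooted at `v`: vertices `w` such that `u` lies on the (unique) path from `v` to `w`. -/
noncomputable def subtreeSize {V : Type*} (G : SimpleGraph V) (v u : V) : ℕ :=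
  Nat.card {w : V | ∀ p : G.Path v w, u ∈ (p : G.Walk v w).support}

/-- Generalized binomial coefficient via the Gamma function. -/
noncomputable def genBinom (x y : ℝ) : ℝ :=
  Real.Gamma (x + 1) / (Real.Gamma (y + 1) * Real.Gamma (x - y + 1))

/-!
Both Pascal rules — for `Nat.choose` in the first factor and for `genBinom` in the second —
show that `F x = ∑_{i ≤ y} C(x,i) C(w-x+1, z+y-i+1)` satisfies `F x - F (x+1) = C(x,y) C(w-x,z)`.
So the left-hand side telescopes to `F x - F (N+1)`, and `F (N+1) = 0` because
`1/Γ` vanishes at the non-positive integers; the same vanishing trims the range of `i` in `F x`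
to `[x+y-N, y]`.
-/

theorem Real.inv_Gamma_eq_self_mul_inv_Gamma_add_one (s : ℝ) :
    (Gamma s)⁻¹ = s * (Gamma (s + 1))⁻¹ := by
  rcases eq_or_ne s 0 with rfl | hs
  · simp
  · rw [Real.Gamma_add_one hs, mul_inv, mul_inv_cancel_left₀ hs]

theorem genBinom_eq_zero {a b : ℝ} (n : ℕ) (h : b = a + n + 1) : genBinom a b = 0 := by
  have hb : a - b + 1 = -n := by rw [h]; ring
  rw [genBinom, hb, Real.Gamma_neg_nat_eq_zero, mul_zero, div_zero]

theorem genBinom_natCast (n k : ℕ) : genBinom n k = n.choose k := by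
  rcases le_or_gt k n with h | h
  · rw [genBinom, Nat.cast_choose ℝ h, ← Nat.cast_sub h]
    simp only [Real.Gamma_nat_eq_factorial]
  · rw [Nat.choose_eq_zero_of_lt h, Nat.cast_zero, genBinom_eq_zero (k - n - 1)]
    rw [Nat.cast_sub (by omega), Nat.cast_sub h.le]
    ring

/-- Pascal's rule, valid for all real `b` since `1/Γ` has no poles. -/
theorem genBinom_add_one_add_one {a : ℝ} (b : ℝ) (ha : a + 1 ≠ 0) :
    genBinom (a + 1) (b + 1) = genBinom a (b + 1) + genBinom a b := by
  have hdiff : a + 1 - (b + 1) + 1 = a - b + 1 := by ring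
  have hdiff' : a - (b + 1) + 1 = a - b := by ring
  simp only [genBinom, div_eq_mul_inv, mul_inv, hdiff, hdiff']
  rw [Real.Gamma_add_one ha, Real.inv_Gamma_eq_self_mul_inv_Gamma_add_one (b + 1),
    Real.inv_Gamma_eq_self_mul_inv_Gamma_add_one (a - b)]
  ring

theorem sum_range_choose_succ_mul {R : Type*} [Semiring R] (x y : ℕ) (g : ℕ → R) :
    ∑ i ∈ range (y + 1), ((x + 1).choose i : R) * g i =
      ∑ i ∈ range (y + 1), (x.choose i : R) * g i +
        ∑ i ∈ range y, (x.choose i : R) * g (i + 1) := by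
  rw [sum_range_succ' (fun i => ((x + 1).choose i : R) * g i),
    sum_range_succ' (fun i => (x.choose i : R) * g i)]
  simp only [Nat.choose_succ_succ', Nat.cast_add, add_mul, sum_add_distrib, Nat.choose_zero_right]
  abel

theorem sum_range_choose_mul_genBinom_sub_succ (x y : ℕ) {w : ℝ} (c : ℝ) (hw : w - x + 1 ≠ 0) :
    ∑ i ∈ range (y + 1), (x.choose i : ℝ) * genBinom (w - x + 1) (c - i + 1) -
        ∑ i ∈ range (y + 1), ((x + 1).choose i : ℝ) * genBinom (w - ↑(x + 1) + 1) (c - i + 1) =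
      x.choose y * genBinom (w - x) (c - y) := by
  have hw' : w - ↑(x + 1) + 1 = w - x := by push_cast; ring
  have hc (i : ℕ) : c - ↑(i + 1) + 1 = c - i := by push_cast; ring
  rw [hw', sum_range_choose_succ_mul]
  simp only [genBinom_add_one_add_one _ hw, hc, mul_add, sum_add_distrib, add_sub_add_left_eq_sub,
    sum_range_succ_sub_sum]

theorem sum_Icc_choose_mul_genBinom {x y N : ℕ} {z w : ℝ} (hz : -1 < z) (hwz : w - z = N)
    (hxN : x ≤ N) :
    ∑ j ∈ Icc x N, (j.choose y : ℝ) * genBinom (w - j) z =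
      ∑ i ∈ range (y + 1), (x.choose i : ℝ) * genBinom (w - x + 1) (z + y - i + 1) := by
  set F : ℕ → ℝ := fun k =>
    ∑ i ∈ range (y + 1), (k.choose i : ℝ) * genBinom (w - k + 1) (z + y - i + 1)
  have hstep : ∀ j ∈ Icc x N, (j.choose y : ℝ) * genBinom (w - j) z = -(F (j + 1) - F j) := by
    intro j hj
    have hjN : (j : ℝ) ≤ N := by exact_mod_cast (mem_Icc.1 hj).2
    rw [neg_sub, sum_range_choose_mul_genBinom_sub_succ j y (z + y) (by linarith),
      add_sub_cancel_right]
  have hlast : F (N + 1) = 0 := by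
    refine sum_eq_zero fun i hi => ?_
    rw [genBinom_eq_zero (y - i), mul_zero]
    rw [Nat.cast_sub (Nat.lt_succ_iff.1 (mem_range.1 hi))]
    push_cast
    linarith
  rw [sum_congr rfl hstep, sum_neg_distrib, sum_Icc_sub hxN, hlast, zero_sub, neg_neg]

theorem genBinom_sum_identity_general (x y : ℕ) (z w : ℝ)
    (hz : 0 < z) (N : ℕ) (hwz : w - z = N) (hxN : x ≤ N) :
    ∑ j ∈ Finset.Icc x N, genBinom (j : ℝ) (y : ℝ) * genBinom (w - j) z =
      ∑ i ∈ Finset.Icc (x + y - N) y,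
        genBinom (x : ℝ) (i : ℝ) * genBinom (w - x + 1) (z + y - i + 1) := by
  simp only [genBinom_natCast]
  rw [sum_Icc_choose_mul_genBinom (by linarith) hwz hxN]
  symm
  refine sum_subset (fun i hi => by simp only [mem_Icc, mem_range] at hi ⊢; omega) ?_
  intro i hiy hi
  have hlt : i + 1 ≤ x + y - N := by simp only [mem_Icc, mem_range] at hi hiy; omega
  rw [genBinom_eq_zero (x + y - N - (i + 1)), mul_zero]
  rw [Nat.cast_sub hlt, Nat.cast_sub (by omega)]
  push_cast
  linarith

/-- For positive integers `x, y` and positive reals `z, w` with `w - z` a positive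
integer `N ≥ x`, the identity
`∑_{j=x}^{w-z} C(j,y) C(w-j,z) = ∑_{i=max(0,x+y+z-w)}^{y} C(x,i) C(w-x+1, z+y-i+1)`
holds for generalized binomial coefficients. -/
theorem genBinom_sum_identity (x y : ℕ) (hx : 0 < x) (hy : 0 < y) (z w : ℝ)
    (hz : 0 < z) (hw : 0 < w) (N : ℕ) (hN : 0 < N) (hwz : w - z = N) (hxN : x ≤ N) :
    ∑ j ∈ Finset.Icc x N, genBinom (j : ℝ) (y : ℝ) * genBinom (w - j) z =
      ∑ i ∈ Finset.Icc (x + y - N) y,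
        genBinom (x : ℝ) (i : ℝ) * genBinom (w - x + 1) (z + y - i + 1) :=
  genBinom_sum_identity_general x y z w hz N hwz hxN
end

section
/- For positive integers x, y, z, w with w - z ≥ x, the combinatorial identity ∑_{j=x}^{w-z} C(j,y)·C(w-j,z) = ∑_{i=0}^{y} C(x,i)·C(w-x+1, z+y-i+1) holds for ordinary binomial coefficients. -/
open SimpleGraph Finset Nat

/-! Both sides count `(y+z+1)`-subsets of `{0, …, w}` with at most `y` elements below `x`: on the
left by the position `j` of the `(y+1)`-st element, on the right by the number `i` of elements
below `x`. Algebraically, the right side as a function of `x` satisfies the recursion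
`G x = C(x,y) C(w-x,z) + G (x+1)` (Pascal's rule in both factors) and vanishes at `x = w-z+1`,
so it telescopes to the left side. -/

theorem eq_sum_Ico_add_of_eq_add_succ {M : Type*} [AddCommMonoid M] {f g : ℕ → M} {a b : ℕ}
    (hab : a ≤ b) (hstep : ∀ j ∈ Ico a b, g j = f j + g (j + 1)) :
    g a = ∑ j ∈ Ico a b, f j + g b := by
  induction b, hab using Nat.le_induction with
  | base => simp
  | succ b hab ih =>
    rw [sum_Ico_succ_top hab, add_assoc, ← hstep b (by simp [hab])]
    exact ih fun j hj => hstep j (by simp only [mem_Ico] at hj ⊢; omega)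

/-- The number of `k`-subsets of an `(m+n)`-set with at most `y` elements in a fixed `m`-subset. -/
def cappedChoose (m n y k : ℕ) : ℕ :=
  ∑ i ∈ range (y + 1), m.choose i * n.choose (k - i)

theorem cappedChoose_succ_right (m n k : ℕ) {y : ℕ} (hy : y < k) :
    cappedChoose m (n + 1) y k =
      m.choose y * n.choose (k - 1 - y) + cappedChoose (m + 1) n y k := by
  induction y with
  | zero =>
    obtain ⟨k, rfl⟩ : ∃ k', k = k' + 1 := ⟨k - 1, by omega⟩
    simp only [cappedChoose, zero_add, sum_range_one, choose_zero_right, one_mul, Nat.sub_zero,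
      Nat.add_sub_cancel, choose_succ_succ']
  | succ y ih =>
    have hk : k - (y + 1) = k - 1 - (y + 1) + 1 := by omega
    have hky : k - 1 - y = k - (y + 1) := by omega
    unfold cappedChoose at ih ⊢
    rw [sum_range_succ, ih (by omega), sum_range_succ _ (y + 1), hk, choose_succ_succ' n,
      choose_succ_succ' m, hky, hk]
    ring

theorem cappedChoose_eq_zero {m n y k : ℕ} (h : n + y < k) : cappedChoose m n y k = 0 :=
  sum_eq_zero fun i hi => by
    rw [Nat.choose_eq_zero_of_lt (n := n) (by simp only [mem_range] at hi; omega), mul_zero]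

theorem choose_sum_identity_general (x y z w : ℕ) (h : x ≤ w - z) :
    ∑ j ∈ Finset.Icc x (w - z), j.choose y * (w - j).choose z =
      ∑ i ∈ Finset.range (y + 1), x.choose i * (w - x + 1).choose (z + y - i + 1) := by
  set G : ℕ → ℕ := fun j => cappedChoose j (w + 1 - j) y (z + y + 1)
  have hstep : ∀ j ∈ Ico x (w - z + 1), G j = j.choose y * (w - j).choose z + G (j + 1) := by
    intro j hj
    have hjw : w + 1 - j = w - j + 1 := by simp only [mem_Ico] at hj; omega
    simp only [G, hjw, Nat.add_sub_add_right,
      cappedChoose_succ_right _ _ _ (show y < z + y + 1 by omega),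
      show z + y + 1 - 1 - y = z by omega]
  have hend : G (w - z + 1) = 0 := cappedChoose_eq_zero (by omega)
  have hG : G x = ∑ i ∈ range (y + 1), x.choose i * (w - x + 1).choose (z + y - i + 1) :=
    sum_congr rfl fun i hi => by simp only [mem_range] at hi; congr 2 <;> omega
  rw [← hG, eq_sum_Ico_add_of_eq_add_succ (by omega) hstep, hend, add_zero,
    Finset.Ico_add_one_right_eq_Icc]

/-- For positive integers `x, y, z, w` with `w - z ≥ x`, we have
`∑_{j=x}^{w-z} C(j,y) C(w-j,z) = ∑_{i=0}^{y} C(x,i) C(w-x+1, z+y-i+1)`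
for ordinary binomial coefficients. -/
theorem choose_sum_identity (x y z w : ℕ) (hx : 0 < x) (hy : 0 < y) (hz : 0 < z)
    (hw : 0 < w) (h : x ≤ w - z) :
    ∑ j ∈ Finset.Icc x (w - z), j.choose y * (w - j).choose z =
      ∑ i ∈ Finset.range (y + 1), x.choose i * (w - x + 1).choose (z + y - i + 1) :=
  choose_sum_identity_general x y z w h
end

section
/- If T is a path with n vertices v_1, v_2, ..., v_n (n ≥ 2), then the number of shellings of T rooted at v_i equals the binomial coefficient C(n-1, i-1). -/
open SimpleGraph Finset Nat

/-!
Number the edges of the path `v_0, …, v_{n-1}` as `0, …, n - 2`, edge `j` joining `v_j` and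
`v_{j+1}`; the `i` edges of positions `< i` lie to the left of `v_i`. A nonempty set of edges is
connected iff its positions form an interval, so a shelling rooted at `v_i` grows an interval of
positions from the cut at `i`, each new edge extending it by one on the left or on the right.
The shelling is determined by the set of times of its left steps, which can be any `i` of the
`n - 1` times.
-/

lemma SimpleGraph.reachable_induce_support {V : Type*} {G : SimpleGraph V} {u v : V}
    (hu : u ∈ G.support) (hv : v ∈ G.support) (h : G.Reachable u v) :
    (G.induce G.support).Reachable ⟨u, hu⟩ ⟨v, hv⟩ := by
  obtain ⟨p⟩ := h
  by_cases hp : p.Nil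
  · obtain rfl := hp.eq
    rfl
  have hsub : {w | w ∈ p.support} ⊆ G.support := fun _ ↦ mem_support_of_mem_walk_support p hp
  exact (p.connected_induce_support.preconnected ⟨u, p.start_mem_support⟩
    ⟨v, p.end_mem_support⟩).map (induceHomOfLE _ hsub).toHom

lemma card_filter_equiv_val_lt {ι : Type*} [Fintype ι] {k i : ℕ} (τ : ι ≃ Fin k) (hi : i ≤ k) :
    #{s | (τ s : ℕ) < i} = i := by
  rw [← Fintype.card_subtype, Fintype.card_congr (τ.subtypeEquiv
      (p := fun s ↦ (τ s : ℕ) < i) (q := fun y : Fin k ↦ (y : ℕ) < i) fun _ ↦ Iff.rfl),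
    Fintype.card_subtype, Fin.card_filter_val_lt, min_eq_right hi]

section IntervalOrderings

variable {ι : Type*} [LinearOrder ι]

def OrdConnectedPrefixes {α : Type*} [LinearOrder α] (τ : ι → α) : Prop :=
  ∀ t, (τ '' Set.Iic t).OrdConnected

lemma OrdConnectedPrefixes.le_of_mem_uIcc {α : Type*} [LinearOrder α] [OrderBot ι] {τ : ι → α}
    (hτ : OrdConnectedPrefixes τ) (hinj : Function.Injective τ) {s t : ι}
    (h : τ t ∈ Set.uIcc (τ ⊥) (τ s)) : t ≤ s := by
  obtain ⟨u, hu, hut⟩ := (hτ s).uIcc_subset ⟨⊥, bot_le, rfl⟩ ⟨s, le_rfl, rfl⟩ h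
  exact hinj hut ▸ hu

lemma card_filter_le_pos {B : Finset ι} {t : ι} (ht : t ∈ B) : 0 < #{s ∈ B | s ≤ t} :=
  card_pos.mpr ⟨t, mem_filter.mpr ⟨ht, le_rfl⟩⟩

lemma card_filter_le_mono (B : Finset ι) {s t : ι} (hst : s ≤ t) :
    #{x ∈ B | x ≤ s} ≤ #{x ∈ B | x ≤ t} :=
  card_le_card (monotone_filter_right B fun _ _ hx ↦ hx.trans hst)

lemma card_filter_le_strictMono {B : Finset ι} {s t : ι} (hst : s < t) (ht : t ∈ B) :
    #{x ∈ B | x ≤ s} < #{x ∈ B | x ≤ t} := by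
  refine card_lt_card ((ssubset_iff_of_subset ?_).mpr ⟨t, ?_, ?_⟩)
  · exact monotone_filter_right B fun _ _ hx ↦ hx.trans hst.le
  · exact mem_filter.mpr ⟨ht, le_rfl⟩
  · simpa using fun _ ↦ hst

variable [Fintype ι] {k i : ℕ}

lemma card_filter_le_add_card_filter_le_compl (A : Finset ι) (t : ι) :
    #{s ∈ A | s ≤ t} + #{s ∈ Aᶜ | s ≤ t} = #{s | s ≤ t} := by
  rw [← card_union_of_disjoint (disjoint_filter_filter disjoint_compl_right), ← filter_union,
    union_compl]

/-- The ordering that grows an interval of positions from the cut between `i - 1` and `i`: the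
value at a time in `A` extends it by one to the left, at any other time by one to the right. -/
def stepOrdering (i : ℕ) (A : Finset ι) (t : ι) : ℕ :=
  if t ∈ A then i - #{s ∈ A | s ≤ t} else i + #{s ∈ Aᶜ | s ≤ t} - 1

variable {A : Finset ι}

lemma stepOrdering_lt_iff (hA : #A = i) {t : ι} : stepOrdering i A t < i ↔ t ∈ A := by
  unfold stepOrdering
  split_ifs with ht
  · have := card_filter_le_pos ht
    have := hA ▸ card_filter_le A (· ≤ t)
    simp only [ht, iff_true]
    omega
  · have := card_filter_le_pos (mem_compl.mpr ht)
    simp only [ht, iff_false]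
    omega

lemma stepOrdering_lt_card (hA : #A = i) (t : ι) : stepOrdering i A t < Fintype.card ι := by
  have := hA ▸ card_le_univ A
  unfold stepOrdering
  split_ifs with ht
  · have := card_filter_le_pos ht
    have := hA ▸ card_filter_le A (· ≤ t)
    omega
  · have := card_filter_le_pos (mem_compl.mpr ht)
    have : #{s ∈ Aᶜ | s ≤ t} ≤ Fintype.card ι - i := by
      rw [← hA, ← card_compl]
      exact card_filter_le _ _
    omega

lemma stepOrdering_injective (hA : #A = i) : Function.Injective (stepOrdering i A) := by
  intro s t hst
  have hmem : s ∈ A ↔ t ∈ A := by rw [← stepOrdering_lt_iff hA, ← stepOrdering_lt_iff hA, hst]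
  by_contra hne
  wlog hlt : s < t generalizing s t
  · exact this hst.symm hmem.symm (Ne.symm hne) (lt_of_le_of_ne (not_lt.mp hlt) (Ne.symm hne))
  unfold stepOrdering at hst
  by_cases ht : t ∈ A
  · have := card_filter_le_strictMono hlt ht
    have := hA ▸ card_filter_le A (· ≤ t)
    rw [if_pos (hmem.mpr ht), if_pos ht] at hst
    omega
  · have := card_filter_le_strictMono hlt (mem_compl.mpr ht)
    have := card_filter_le_pos (mem_compl.mpr (mt hmem.mp ht))
    rw [if_neg (mt hmem.mp ht), if_neg ht] at hst
    omega

lemma image_stepOrdering_Iic (hA : #A = i) (t : ι) :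
    ({s | s ≤ t} : Finset ι).image (stepOrdering i A) =
      Ico (i - #{s ∈ A | s ≤ t}) (i + #{s ∈ Aᶜ | s ≤ t}) := by
  have hℓ := hA ▸ card_filter_le A (· ≤ t)
  refine eq_of_subset_of_card_le (fun x hx ↦ ?_) ?_
  · obtain ⟨s, hs, rfl⟩ := mem_image.mp hx
    replace hs : s ≤ t := by simpa using hs
    have := card_filter_le_mono A hs
    have := card_filter_le_mono Aᶜ hs
    rw [mem_Ico]
    unfold stepOrdering
    split_ifs with hsA
    · have := card_filter_le_pos hsA
      omega
    · have := card_filter_le_pos (mem_compl.mpr hsA)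
      omega
  · rw [Nat.card_Ico, card_image_of_injective _ (stepOrdering_injective hA),
      ← card_filter_le_add_card_filter_le_compl A t]
    omega

noncomputable def stepOrderingEquiv (hk : Fintype.card ι = k) (hA : #A = i) : ι ≃ Fin k :=
  Equiv.ofBijective (fun t ↦ ⟨stepOrdering i A t, hk ▸ stepOrdering_lt_card hA t⟩)
    ((Fintype.bijective_iff_injective_and_card _).mpr
      ⟨fun _ _ h ↦ stepOrdering_injective hA (congrArg Fin.val h), by simp [hk]⟩)

lemma val_stepOrderingEquiv (hk : Fintype.card ι = k) (hA : #A = i) (t : ι) :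
    (stepOrderingEquiv hk hA t : ℕ) = stepOrdering i A t :=
  rfl

lemma ordConnectedPrefixes_stepOrderingEquiv (hk : Fintype.card ι = k) (hA : #A = i) :
    OrdConnectedPrefixes (stepOrderingEquiv hk hA) := by
  intro t
  have himage : stepOrderingEquiv hk hA '' Set.Iic t =
      Fin.val ⁻¹' Set.Ico (i - #{s ∈ A | s ≤ t}) (i + #{s ∈ Aᶜ | s ≤ t}) := by
    ext y
    rw [Set.mem_preimage, ← coe_Ico, mem_coe, ← image_stepOrdering_Iic hA t]
    simp only [Set.mem_image, Set.mem_Iic, mem_image, mem_filter, mem_univ, true_and, Fin.ext_iff,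
      val_stepOrderingEquiv]
  rw [himage]
  exact Set.ordConnected_Ico.preimage_mono Fin.val_strictMono.monotone

section Rooted

variable [OrderBot ι] {τ : ι → Fin k}

lemma stepOrdering_bot (hA : #A = i) : stepOrdering i A ⊥ ≤ i ∧ i ≤ stepOrdering i A ⊥ + 1 := by
  have h := card_filter_le_add_card_filter_le_compl A ⊥
  rw [show ({s | s ≤ ⊥} : Finset ι) = {⊥} by ext; simp, card_singleton] at h
  unfold stepOrdering
  split_ifs with hbot
  · have := card_filter_le_pos hbot
    omega
  · have := card_filter_le_pos (mem_compl.mpr hbot)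
    omega

lemma OrdConnectedPrefixes.image_filter_lt (hτ : OrdConnectedPrefixes τ)
    (hinj : Function.Injective τ) (hroot : i ≤ τ ⊥ + 1) {t : ι} (ht : (τ t : ℕ) < i) :
    ({s | (τ s : ℕ) < i ∧ s ≤ t} : Finset ι).image (fun s ↦ (τ s : ℕ)) = Ico (τ t : ℕ) i := by
  ext x
  simp only [mem_image, mem_filter, mem_univ, true_and, mem_Ico]
  constructor
  · rintro ⟨s, ⟨hsi, hst⟩, rfl⟩
    refine ⟨not_lt.mp fun hlt ↦ hlt.ne ?_, hsi⟩
    have hts : t ≤ s := hτ.le_of_mem_uIcc hinj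
      (Set.mem_uIcc.mpr (Or.inr ⟨hlt.le, by rw [Fin.le_def]; omega⟩))
    rw [le_antisymm hst hts]
  · rintro ⟨htx, hxi⟩
    have hx : (⟨x, by omega⟩ : Fin k) ∈ Set.uIcc (τ ⊥) (τ t) :=
      Set.mem_uIcc.mpr (Or.inr ⟨Fin.le_def.mpr htx, Fin.le_def.mpr (by dsimp only; omega)⟩)
    obtain ⟨s, hst, hs⟩ := (hτ t).uIcc_subset ⟨⊥, bot_le, rfl⟩ ⟨t, le_rfl, rfl⟩ hx
    exact ⟨s, ⟨by simp only [hs]; omega, hst⟩, by simp [hs]⟩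

lemma OrdConnectedPrefixes.image_filter_ge (hτ : OrdConnectedPrefixes τ)
    (hinj : Function.Injective τ) (hroot : τ ⊥ ≤ i) {t : ι} (ht : i ≤ (τ t : ℕ)) :
    ({s | i ≤ (τ s : ℕ) ∧ s ≤ t} : Finset ι).image (fun s ↦ (τ s : ℕ)) = Icc i (τ t : ℕ) := by
  ext x
  simp only [mem_image, mem_filter, mem_univ, true_and, mem_Icc]
  constructor
  · rintro ⟨s, ⟨his, hst⟩, rfl⟩
    refine ⟨his, not_lt.mp fun hlt ↦ hlt.ne' ?_⟩
    have hts : t ≤ s := hτ.le_of_mem_uIcc hinj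
      (Set.mem_uIcc.mpr (Or.inl ⟨by rw [Fin.le_def]; omega, hlt.le⟩))
    rw [le_antisymm hst hts]
  · rintro ⟨hix, hxt⟩
    have hx : (⟨x, by omega⟩ : Fin k) ∈ Set.uIcc (τ ⊥) (τ t) :=
      Set.mem_uIcc.mpr (Or.inl ⟨Fin.le_def.mpr (by dsimp only; omega), Fin.le_def.mpr hxt⟩)
    obtain ⟨s, hst, hs⟩ := (hτ t).uIcc_subset ⟨⊥, bot_le, rfl⟩ ⟨t, le_rfl, rfl⟩ hx
    exact ⟨s, ⟨by simp only [hs]; omega, hst⟩, by simp [hs]⟩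

lemma OrdConnectedPrefixes.val_eq_stepOrdering (hτ : OrdConnectedPrefixes τ)
    (hinj : Function.Injective τ) (hroot : (τ ⊥ : ℕ) ≤ i ∧ i ≤ τ ⊥ + 1) (t : ι) :
    (τ t : ℕ) = stepOrdering i {s | (τ s : ℕ) < i} t := by
  have hinj' : Function.Injective fun s ↦ (τ s : ℕ) := Fin.val_injective.comp hinj
  unfold stepOrdering
  rw [compl_filter, filter_filter, filter_filter]
  split_ifs with ht
  · replace ht : (τ t : ℕ) < i := by simpa using ht
    have h := congrArg card (hτ.image_filter_lt hinj hroot.2 ht)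
    rw [card_image_of_injective _ hinj', Nat.card_Ico] at h
    omega
  · replace ht : i ≤ (τ t : ℕ) := by simpa using ht
    have h := congrArg card (hτ.image_filter_ge hinj hroot.1 ht)
    rw [card_image_of_injective _ hinj', Nat.card_Icc] at h
    simp only [not_lt]
    omega

noncomputable def rootedOrdConnectedPrefixesEquiv (hk : Fintype.card ι = k) (i : ℕ) :
    {τ : ι ≃ Fin k // OrdConnectedPrefixes τ ∧ (τ ⊥ : ℕ) ≤ i ∧ i ≤ τ ⊥ + 1} ≃
      {A : Finset ι // #A = i} where
  toFun τ := ⟨({s | (τ.1 s : ℕ) < i} : Finset ι),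
    card_filter_equiv_val_lt τ.1 (τ.2.2.2.trans (τ.1 ⊥).isLt)⟩
  invFun A := ⟨stepOrderingEquiv hk A.2, ordConnectedPrefixes_stepOrderingEquiv hk A.2,
    stepOrdering_bot A.2⟩
  left_inv τ := Subtype.ext <| Equiv.ext fun t ↦
    Fin.ext (τ.2.1.val_eq_stepOrdering τ.1.injective τ.2.2 t).symm
  right_inv A := Subtype.ext <| Finset.ext fun t ↦ by
    simp [val_stepOrderingEquiv, stepOrdering_lt_iff A.2]

theorem card_rootedOrdConnectedPrefixes (hk : Fintype.card ι = k) (i : ℕ) :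
    Nat.card {τ : ι ≃ Fin k // OrdConnectedPrefixes τ ∧ (τ ⊥ : ℕ) ≤ i ∧ i ≤ τ ⊥ + 1} =
      k.choose i := by
  rw [Nat.card_congr (rootedOrdConnectedPrefixesEquiv hk i), Nat.card_eq_fintype_card,
    Fintype.card_finset_len, hk]

end Rooted

end IntervalOrderings

section PathEdges

variable {k : ℕ}

def pathEdge (j : Fin k) : Sym2 (Fin (k + 1)) := s(j.castSucc, j.succ)

lemma mem_pathEdge {j : Fin k} {v : Fin (k + 1)} :
    v ∈ pathEdge j ↔ (j : ℕ) ≤ v ∧ (v : ℕ) ≤ j + 1 := by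
  simp only [pathEdge, Sym2.mem_iff, Fin.ext_iff, Fin.val_castSucc, Fin.val_succ]
  omega

lemma pathEdge_eq_iff {j : Fin k} {u v : Fin (k + 1)} :
    pathEdge j = s(u, v) ↔ (u : ℕ) = j ∧ (v : ℕ) = j + 1 ∨ (v : ℕ) = j ∧ (u : ℕ) = j + 1 := by
  simp only [pathEdge, Sym2.eq_iff, Fin.ext_iff, Fin.val_castSucc, Fin.val_succ]
  omega

lemma pathEdge_injective : Function.Injective (pathEdge (k := k)) := by
  intro j j' h
  have h₁ : j.castSucc ∈ pathEdge j' := h ▸ Sym2.mem_mk_left _ _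
  have h₂ : j.succ ∈ pathEdge j' := h ▸ Sym2.mem_mk_right _ _
  simp only [mem_pathEdge, Fin.val_castSucc, Fin.val_succ] at h₁ h₂
  omega

lemma pathEdge_mem_edgeSet (j : Fin k) : pathEdge j ∈ (pathGraph (k + 1)).edgeSet := by
  simp [pathEdge, pathGraph_adj]

lemma exists_pathEdge_eq {e : Sym2 (Fin (k + 1))} (he : e ∈ (pathGraph (k + 1)).edgeSet) :
    ∃ j, pathEdge j = e := by
  induction e using Sym2.ind with | _ u v => ?_
  rw [mem_edgeSet, pathGraph_adj] at he
  rcases he with h | h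
  · exact ⟨⟨u, by omega⟩, pathEdge_eq_iff.mpr (by dsimp only; omega)⟩
  · exact ⟨⟨v, by omega⟩, pathEdge_eq_iff.mpr (by dsimp only; omega)⟩

variable (k) in
noncomputable def pathEdgeEquiv : Fin k ≃ (pathGraph (k + 1)).edgeSet :=
  Equiv.ofBijective (fun j ↦ ⟨pathEdge j, pathEdge_mem_edgeSet j⟩)
    ⟨fun _ _ h ↦ pathEdge_injective (congrArg Subtype.val h),
      fun e ↦ (exists_pathEdge_eq e.2).imp fun _ h ↦ Subtype.ext h⟩

lemma coe_pathEdgeEquiv (j : Fin k) : (pathEdgeEquiv k j : Sym2 (Fin (k + 1))) = pathEdge j :=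
  rfl

variable (k) in
lemma card_edgeSet_pathGraph : Nat.card (pathGraph (k + 1)).edgeSet = k :=
  Nat.card_eq_of_equiv_fin (pathEdgeEquiv k).symm

variable {T : Set (Fin k)}

lemma fromEdgeSet_pathEdge_adj {u v : Fin (k + 1)} :
    (fromEdgeSet (pathEdge '' T)).Adj u v ↔ ∃ j ∈ T, pathEdge j = s(u, v) := by
  rw [fromEdgeSet_adj]
  refine ⟨fun h ↦ h.1, fun h ↦ ⟨h, ?_⟩⟩
  obtain ⟨j, -, hj⟩ := h
  rw [pathEdge_eq_iff] at hj
  rintro rfl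
  omega

lemma mem_support_fromEdgeSet_pathEdge {v : Fin (k + 1)} :
    v ∈ (fromEdgeSet (pathEdge '' T)).support ↔ ∃ j ∈ T, v ∈ pathEdge j := by
  simp only [mem_support, fromEdgeSet_pathEdge_adj]
  constructor
  · rintro ⟨w, j, hj, hjv⟩
    exact ⟨j, hj, hjv ▸ Sym2.mem_mk_left v w⟩
  · rintro ⟨j, hj, hv⟩
    obtain ⟨w, hw⟩ := Sym2.mem_iff_exists.mp hv
    exact ⟨w, j, hj, hw⟩

lemma ordConnected_of_edgeSetConnected_image_pathEdge
    (h : EdgeSetConnected (Fin (k + 1)) (pathEdge '' T)) : T.OrdConnected := by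
  refine ⟨fun a ha c hc b hb ↦ ?_⟩
  by_contra hbT
  set H := fromEdgeSet (pathEdge '' T)
  have hu : a.castSucc ∈ H.support :=
    mem_support_fromEdgeSet_pathEdge.mpr ⟨a, ha, Sym2.mem_mk_left _ _⟩
  have hv : c.succ ∈ H.support :=
    mem_support_fromEdgeSet_pathEdge.mpr ⟨c, hc, Sym2.mem_mk_right _ _⟩
  obtain ⟨p⟩ := (h.preconnected ⟨_, hu⟩ ⟨_, hv⟩).map (Embedding.induce H.support).toHom
  simp only [Set.mem_Icc, Fin.le_iff_val_le_val] at hb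
  -- a walk from the left of the missing edge `b` to its right has to cross it
  obtain ⟨d, -, hd₁, hd₂⟩ := p.exists_boundary_dart {v | (v : ℕ) ≤ b}
    (show (a : ℕ) ≤ b from hb.1) (show ¬(c : ℕ) + 1 ≤ b by omega)
  obtain ⟨j, hj, hjd⟩ := fromEdgeSet_pathEdge_adj.mp d.adj
  rw [pathEdge_eq_iff] at hjd
  simp only [Set.mem_ofPred_eq] at hd₁ hd₂
  obtain rfl : j = b := by omega
  exact hbT hj

lemma edgeSetConnected_image_pathEdge (hne : T.Nonempty) (hT : T.OrdConnected) :
    EdgeSetConnected (Fin (k + 1)) (pathEdge '' T) := by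
  set H := fromEdgeSet (pathEdge '' T)
  have hreach : ∀ u ∈ H.support, ∀ v ∈ H.support, u ≤ v → H.Reachable u v := by
    intro u hu v hv huv
    obtain ⟨j, hj, hju⟩ := mem_support_fromEdgeSet_pathEdge.mp hu
    obtain ⟨j', hj', hj'v⟩ := mem_support_fromEdgeSet_pathEdge.mp hv
    rw [mem_pathEdge] at hju hj'v
    rw [reachable_iff_reflTransGen]
    refine reflTransGen_of_succ_of_le _ (fun w hw ↦ ?_) huv
    simp only [Set.mem_Ico, Fin.le_iff_val_le_val, Fin.lt_def] at hw
    obtain ⟨w, rfl⟩ : ∃ w' : Fin k, w'.castSucc = w := ⟨⟨w, by omega⟩, rfl⟩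
    rw [Fin.orderSucc_castSucc]
    refine fromEdgeSet_pathEdge_adj.mpr ⟨w, hT.out hj hj' ⟨?_, ?_⟩, rfl⟩ <;>
      simp only [Fin.le_iff_val_le_val, Fin.val_castSucc] at hw ⊢ <;> omega
  obtain ⟨j₀, hj₀⟩ := hne
  have hv₀ : j₀.castSucc ∈ H.support :=
    mem_support_fromEdgeSet_pathEdge.mpr ⟨j₀, hj₀, Sym2.mem_mk_left _ _⟩
  have : Nonempty H.support := ⟨⟨_, hv₀⟩⟩
  refine ⟨fun u v ↦ ?_⟩
  rcases le_total u.1 v.1 with huv | hvu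
  · exact reachable_induce_support u.2 v.2 (hreach _ u.2 _ v.2 huv)
  · exact (reachable_induce_support v.2 u.2 (hreach _ v.2 _ u.2 hvu)).symm

theorem edgeSetConnected_image_pathEdge_iff (hne : T.Nonempty) :
    EdgeSetConnected (Fin (k + 1)) (pathEdge '' T) ↔ T.OrdConnected :=
  ⟨ordConnected_of_edgeSetConnected_image_pathEdge, edgeSetConnected_image_pathEdge hne⟩

end PathEdges

section PathShellings

variable {k : ℕ}

lemma isShelling_pathGraph_iff (τ : Fin (Nat.card (pathGraph (k + 1)).edgeSet) ≃ Fin k) :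
    IsShelling (pathGraph (k + 1)) (τ.trans (pathEdgeEquiv k)) ↔ OrdConnectedPrefixes τ := by
  have hprefix : ∀ t, {e | ∃ s, s ≤ t ∧ (τ.trans (pathEdgeEquiv k) s : Sym2 (Fin (k + 1))) = e} =
      pathEdge '' (τ '' Set.Iic t) := by
    intro t
    rw [Set.image_image]
    rfl
  unfold IsShelling
  simp_rw [hprefix]
  exact forall_congr' fun t ↦ edgeSetConnected_image_pathEdge_iff ⟨τ t, t, Set.self_mem_Iic, rfl⟩

lemma exists_mem_pathEdgeEquiv_zero_iff [NeZero (Nat.card (pathGraph (k + 1)).edgeSet)]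
    (τ : Fin (Nat.card (pathGraph (k + 1)).edgeSet) ≃ Fin k) (v : Fin (k + 1)) :
    (∃ h : 0 < Nat.card (pathGraph (k + 1)).edgeSet,
      v ∈ (τ.trans (pathEdgeEquiv k) ⟨0, h⟩ : Sym2 (Fin (k + 1)))) ↔
      (τ ⊥ : ℕ) ≤ v ∧ (v : ℕ) ≤ τ ⊥ + 1 := by
  have h₀ : 0 < Nat.card (pathGraph (k + 1)).edgeSet := Nat.pos_of_neZero _
  have hbot : (⟨0, h₀⟩ : Fin (Nat.card (pathGraph (k + 1)).edgeSet)) = ⊥ :=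
    Fin.ext (Fin.val_eq_zero_iff.mpr rfl).symm
  refine ⟨fun ⟨h, hv⟩ ↦ ?_, fun hv ↦ ⟨h₀, ?_⟩⟩
  · rwa [← hbot, ← mem_pathEdge]
  · rwa [Equiv.trans_apply, coe_pathEdgeEquiv, mem_pathEdge, hbot]

noncomputable def rootedOrdConnectedPrefixesEquivRootedShelling
    [NeZero (Nat.card (pathGraph (k + 1)).edgeSet)] (v : Fin (k + 1)) :
    {τ : Fin (Nat.card (pathGraph (k + 1)).edgeSet) ≃ Fin k //
      OrdConnectedPrefixes τ ∧ (τ ⊥ : ℕ) ≤ v ∧ (v : ℕ) ≤ τ ⊥ + 1} ≃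
    {σ : Fin (Nat.card (pathGraph (k + 1)).edgeSet) ≃ (pathGraph (k + 1)).edgeSet //
      IsShelling (pathGraph (k + 1)) σ ∧
        ∃ h : 0 < Nat.card (pathGraph (k + 1)).edgeSet, v ∈ (σ ⟨0, h⟩ : Sym2 (Fin (k + 1)))} :=
  Equiv.subtypeEquiv ((Equiv.refl _).equivCongr (pathEdgeEquiv k)) fun τ ↦
    (and_congr (isShelling_pathGraph_iff τ) (exists_mem_pathEdgeEquiv_zero_iff τ v)).symm

end PathShellings

/-- For the path with `n ≥ 2` vertices `v_0, …, v_{n-1}`, the number of shellings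
rooted at `v_i` is `C(n-1, i)`. -/
theorem rootedShellingCount_pathGraph (n : ℕ) (hn : 2 ≤ n) (i : Fin n) :
    rootedShellingCount (pathGraph n) i = (n - 1).choose i.val := by
  obtain ⟨k, rfl⟩ : ∃ k, n = k + 1 := ⟨n - 1, by omega⟩
  have hk := card_edgeSet_pathGraph k
  have : NeZero (Nat.card (pathGraph (k + 1)).edgeSet) := ⟨by omega⟩
  rw [rootedShellingCount, ← Nat.card_congr (rootedOrdConnectedPrefixesEquivRootedShelling i),
    card_rootedOrdConnectedPrefixes ((Fintype.card_fin _).trans hk), Nat.add_sub_cancel]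
end

section
/- Let T be a 'double star': two adjacent centers v_0 and v_1 of degrees d_1 and d_2 respectively (2 ≤ d_1, d_2), with all other vertices being leaves. Then F(T) = ((d_1² + d_2² + d_1·d_2 - d_1 - d_2)/(d_1·d_2)) · (d_1 + d_2 - 2)!. -/
open SimpleGraph Finset Nat

/-- The double star with centers of degrees `a+1` and `b+1`: the center `inl 0`
is joined to `a` leaves and to the center `inr 0`, which is joined to `b` leaves. -/
def doubleStar (a b : ℕ) : SimpleGraph (Fin (a + 1) ⊕ Fin (b + 1)) :=
  SimpleGraph.fromEdgeSet
    ({e | ∃ i : Fin (a + 1), i ≠ 0 ∧ e = s(Sum.inl 0, Sum.inl i)} ∪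
     {e | ∃ j : Fin (b + 1), j ≠ 0 ∧ e = s(Sum.inr 0, Sum.inr j)} ∪
     {s(Sum.inl 0, Sum.inr 0)})

/-! A set of edges of the double star is connected iff it contains the central edge `c = v₀v₁`
or misses all edges at `v₀` or all edges at `v₁`. Hence an edge ordering is a shelling iff `c`
comes first among the `d₁` edges at `v₀` or first among the `d₂` edges at `v₁`. Transpositions
show that `c` comes first among a fixed set of `k` edges in exactly `m!/k` of the `m!` orderings
(`m = d₁ + d₂ - 1`); being first in both groups means being first overall, so
inclusion–exclusion gives `F = m!/d₁ + m!/d₂ - m!/m`. -/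

section FirstAmong

variable {α E : Type*} [LinearOrder α]

lemma Equiv.forall_swap_apply_iff_of_mem [DecidableEq E] {S : Set E} {x c : E} (hx : x ∈ S)
    (hc : c ∈ S) (p : E → Prop) : (∀ y ∈ S, p (Equiv.swap x c y)) ↔ ∀ y ∈ S, p y := by
  have swap_mem : ∀ y ∈ S, Equiv.swap x c y ∈ S := fun y hy => by
    rw [Equiv.swap_apply_def]; split_ifs <;> assumption
  exact ⟨fun h y hy => by simpa using h _ (swap_mem y hy), fun h y hy => h _ (swap_mem y hy)⟩

variable (α) in
noncomputable def firstAmongCount (c : E) (S : Set E) : ℕ :=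
  Nat.card {σ : α ≃ E // ∀ x ∈ S, σ.symm c ≤ σ.symm x}

lemma firstAmongCount_mul_ncard [Finite α] [Finite E] {S : Set E} {c : E} (hc : c ∈ S) :
    firstAmongCount α c S * S.ncard = Nat.card (α ≃ E) := by
  classical
  have := Fintype.ofFinite S
  set P : E → (α ≃ E) → Prop := fun x σ => ∀ y ∈ S, σ.symm x ≤ σ.symm y
  -- composing with the transposition of `x` and `c` exchanges the two events
  have card_fiber : ∀ x : S, Nat.card {σ // P x σ} = Nat.card {σ // P c σ} := fun ⟨x, hx⟩ =>
    Nat.card_congr <| Equiv.subtypeEquiv ((Equiv.refl α).equivCongr (Equiv.swap x c)) fun σ => by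
      simp [P, Equiv.forall_swap_apply_iff_of_mem hx hc (fun y => σ.symm x ≤ σ.symm y)]
  have bij : Function.Bijective (fun p : Σ x : S, {σ // P x σ} => (p.2 : α ≃ E)) := by
    refine ⟨?_, fun σ => ?_⟩
    · rintro ⟨⟨x, hx⟩, σ, hσx⟩ ⟨⟨y, hy⟩, τ, hτy⟩ (rfl : σ = τ)
      obtain rfl : x = y := σ.symm.injective (le_antisymm (hσx y hy) (hτy x hx))
      rfl
    · obtain ⟨x, hx, hmin⟩ := S.exists_min_image σ.symm S.toFinite ⟨c, hc⟩
      exact ⟨⟨⟨x, hx⟩, σ, hmin⟩, rfl⟩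
  calc firstAmongCount α c S * S.ncard = ∑ x : S, Nat.card {σ // P x σ} := by
        rw [Finset.sum_congr rfl fun x _ => card_fiber x, Finset.sum_const, Finset.card_univ,
          smul_eq_mul, mul_comm, ← Nat.card_eq_fintype_card, Nat.card_coe_set_eq, firstAmongCount]
    _ = Nat.card (α ≃ E) := by rw [← Nat.card_sigma, Nat.card_eq_of_bijective _ bij]

lemma forall_le_or_lt_or_lt_iff {ι : Type*} (r : ι → α) (c : ι) (S T : Set ι) :
    (∀ k, r c ≤ k ∨ (∀ x ∈ S, k < r x) ∨ ∀ x ∈ T, k < r x) ↔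
      (∀ x ∈ S, r c ≤ r x) ∨ ∀ x ∈ T, r c ≤ r x := by
  constructor
  · intro h
    by_contra! ⟨⟨x, hx, hxc⟩, ⟨y, hy, hyc⟩⟩
    rcases h (max (r x) (r y)) with h | h | h
    · exact (max_lt hxc hyc).not_ge h
    · exact (h x hx).not_ge (le_max_left _ _)
    · exact (h y hy).not_ge (le_max_right _ _)
  · intro h k
    refine (le_or_gt (r c) k).imp_right fun hk => h.imp ?_ ?_ <;>
      exact fun hc x hx => hk.trans_le (hc x hx)

lemma card_subtype_or_add_firstAmongCount_union [Finite α] [Finite E] (c : E) (S T : Set E) :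
    Nat.card {σ : α ≃ E // (∀ x ∈ S, σ.symm c ≤ σ.symm x) ∨ ∀ x ∈ T, σ.symm c ≤ σ.symm x} +
        firstAmongCount α c (S ∪ T) =
      firstAmongCount α c S + firstAmongCount α c T := by
  have forall_union : ∀ σ : α ≃ E, (∀ x ∈ S ∪ T, σ.symm c ≤ σ.symm x) ↔
      (∀ x ∈ S, σ.symm c ≤ σ.symm x) ∧ ∀ x ∈ T, σ.symm c ≤ σ.symm x := fun _ => forall₂_or_left
  rw [firstAmongCount, Nat.card_congr (Equiv.subtypeEquivRight forall_union)]
  exact Set.ncard_union_add_ncard_inter {σ | _} {σ | _}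

end FirstAmong

lemma Nat.card_fin_card_equiv (E : Type*) [Finite E] :
    Nat.card (Fin (Nat.card E) ≃ E) = (Nat.card E)! := by
  rw [Nat.card_congr ((Finite.equivFin E).symm.equivCongr (Equiv.refl E)), Nat.card_perm]

namespace SimpleGraph

variable {V : Type*} {G : SimpleGraph V}

def edgesAt (G : SimpleGraph V) (v : V) : Set G.edgeSet := {e | v ∈ (e : Sym2 V)}

lemma ncard_edgesAt (v : V) :
    (G.edgesAt v).ncard = Nat.card (G.neighborSet v) := by
  classical
  exact Nat.card_congr <|
    (Equiv.subtypeSubtypeEquivSubtypeInter (· ∈ G.edgeSet) (v ∈ ·)).trans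
      (G.incidenceSetEquivNeighborSet v)

lemma fromEdgeSet_adj_of_subset {P : Set (Sym2 V)} (hP : P ⊆ G.edgeSet) {x y : V} :
    (fromEdgeSet P).Adj x y ↔ s(x, y) ∈ P :=
  ⟨fun h => ((fromEdgeSet_adj _).1 h).1, fun h => (fromEdgeSet_adj _).2 ⟨h, (hP h).ne⟩⟩

lemma mem_support_fromEdgeSet_iff {P : Set (Sym2 V)} (hP : P ⊆ G.edgeSet) {v : V} :
    v ∈ (fromEdgeSet P).support ↔ ∃ e ∈ P, v ∈ e := by
  refine ⟨fun hv => ?_, fun ⟨e, he, hv⟩ => ?_⟩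
  · obtain ⟨w, hvw⟩ := (mem_support _).1 hv
    exact ⟨_, (fromEdgeSet_adj_of_subset hP).1 hvw, Sym2.mem_mk_left v w⟩
  · obtain ⟨w, rfl⟩ := Sym2.mem_iff_exists.1 hv
    exact ((fromEdgeSet_adj_of_subset hP).2 he).mem_support_left

lemma Reachable.induce_support {u v : V} (hu : u ∈ G.support) (hv : v ∈ G.support)
    (h : G.Reachable u v) : (G.induce G.support).Reachable ⟨u, hu⟩ ⟨v, hv⟩ := by
  obtain ⟨p⟩ := h
  induction p with
  | nil => rfl
  | cons huw _ ih =>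
    exact (induce_adj.2 huw).reachable.trans (ih ((mem_support G).2 ⟨_, huw.symm⟩) hv)

lemma connected_induce_support_iff :
    (G.induce G.support).Connected ↔
      G.support.Nonempty ∧ ∀ u ∈ G.support, ∀ v ∈ G.support, G.Reachable u v := by
  refine ⟨fun h => ⟨h.nonempty.elim fun v => ⟨v, v.2⟩, fun u hu v hv => ?_⟩, fun ⟨hne, h⟩ => ?_⟩
  · exact (h.preconnected ⟨u, hu⟩ ⟨v, hv⟩).map (Embedding.induce _).toHom
  · have := hne.to_subtype
    exact (connected_iff _).2 ⟨fun u v => (h u u.2 v v.2).induce_support u.2 v.2, inferInstance⟩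

lemma Reachable.apply_eq_of_forall_adj {β : Type*} (f : V → β) (hf : ∀ x y, G.Adj x y → f x = f y)
    {u v : V} (h : G.Reachable u v) : f u = f v := by
  obtain ⟨p⟩ := h
  induction p with
  | nil => rfl
  | cons huw _ ih => exact (hf _ _ huw).trans ih

end SimpleGraph

open Sum

section DoubleStar

variable {a b : ℕ} {x y : Fin (a + 1) ⊕ Fin (b + 1)}

lemma doubleStar_adj_inl_inr : (doubleStar a b).Adj (inl 0) (inr 0) := by
  simp [doubleStar, fromEdgeSet_adj]

lemma doubleStar_center_mem_of_adj (h : (doubleStar a b).Adj x y) :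
    inl 0 ∈ s(x, y) ∨ inr 0 ∈ s(x, y) := by
  aesop (add simp [doubleStar, fromEdgeSet_adj])

lemma doubleStar_isLeft_eq_of_adj (h : (doubleStar a b).Adj x y)
    (hxy : s(x, y) ≠ s(inl 0, inr 0)) : x.isLeft = y.isLeft := by
  aesop (add simp [doubleStar, fromEdgeSet_adj])

lemma doubleStar_neighborSet_inl :
    (doubleStar a b).neighborSet (inl 0) = insert (inr 0) (inl '' {0}ᶜ) := by
  ext (i | j) <;> aesop (add simp [doubleStar, fromEdgeSet_adj])

lemma doubleStar_neighborSet_inr :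
    (doubleStar a b).neighborSet (inr 0) = insert (inl 0) (inr '' {0}ᶜ) := by
  ext (i | j) <;> aesop (add simp [doubleStar, fromEdgeSet_adj])

lemma doubleStar_ncard_edgesAt_inl : ((doubleStar a b).edgesAt (inl 0)).ncard = a + 1 := by
  rw [ncard_edgesAt, doubleStar_neighborSet_inl, Nat.card_coe_set_eq,
    Set.ncard_insert_of_notMem (by simp), Set.ncard_image_of_injective _ inl_injective,
    Set.ncard_compl]
  simp

lemma doubleStar_ncard_edgesAt_inr : ((doubleStar a b).edgesAt (inr 0)).ncard = b + 1 := by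
  rw [ncard_edgesAt, doubleStar_neighborSet_inr, Nat.card_coe_set_eq,
    Set.ncard_insert_of_notMem (by simp), Set.ncard_image_of_injective _ inr_injective,
    Set.ncard_compl]
  simp

section Connectivity

variable {P : Set (Sym2 (Fin (a + 1) ⊕ Fin (b + 1)))}

lemma not_edgeSetConnected_doubleStar (hP : P ⊆ (doubleStar a b).edgeSet)
    (hc : s(inl 0, inr 0) ∉ P) (h₀ : ∃ e ∈ P, inl 0 ∈ e) (h₁ : ∃ e ∈ P, inr 0 ∈ e) :
    ¬EdgeSetConnected _ P := by
  rw [EdgeSetConnected, connected_induce_support_iff]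
  rintro ⟨-, hreach⟩
  have adj_iff : ∀ {x y}, (fromEdgeSet P).Adj x y ↔ s(x, y) ∈ P := fromEdgeSet_adj_of_subset hP
  have same_side : ∀ x y, (fromEdgeSet P).Adj x y → x.isLeft = y.isLeft := fun x y hxy =>
    doubleStar_isLeft_eq_of_adj (hP (adj_iff.1 hxy)) fun h => hc (h ▸ adj_iff.1 hxy)
  simpa using (hreach _ ((mem_support_fromEdgeSet_iff hP).2 h₀) _
    ((mem_support_fromEdgeSet_iff hP).2 h₁)).apply_eq_of_forall_adj Sum.isLeft same_side

lemma edgeSetConnected_doubleStar (hP : P ⊆ (doubleStar a b).edgeSet) (hne : P.Nonempty)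
    (h : s(inl 0, inr 0) ∈ P ∨ (∀ e ∈ P, inl 0 ∉ e) ∨ ∀ e ∈ P, inr 0 ∉ e) :
    EdgeSetConnected _ P := by
  set H := fromEdgeSet P
  have to_center : ∀ v ∈ H.support,
      ∃ z, (z = inl 0 ∨ z = inr 0) ∧ z ∈ H.support ∧ H.Reachable v z := fun v hv => by
    obtain ⟨w, hvw⟩ := H.mem_support.1 hv
    rcases doubleStar_center_mem_of_adj (hP ((fromEdgeSet_adj_of_subset hP).1 hvw)) with h | h <;>
      rcases Sym2.mem_iff.1 h with rfl | rfl
    · exact ⟨_, .inl rfl, hv, .rfl⟩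
    · exact ⟨_, .inl rfl, hvw.mem_support_right, hvw.reachable⟩
    · exact ⟨_, .inr rfl, hv, .rfl⟩
    · exact ⟨_, .inr rfl, hvw.mem_support_right, hvw.reachable⟩
  have centers_reachable : inl 0 ∈ H.support → inr 0 ∈ H.support →
      H.Reachable (inl 0) (inr 0) := fun h₀ h₁ => by
    obtain ⟨e₀, he₀, h₀⟩ := (mem_support_fromEdgeSet_iff hP).1 h₀
    obtain ⟨e₁, he₁, h₁⟩ := (mem_support_fromEdgeSet_iff hP).1 h₁
    rcases h with hc | h | h
    · exact ((fromEdgeSet_adj_of_subset hP).2 hc).reachable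
    · exact absurd h₀ (h e₀ he₀)
    · exact absurd h₁ (h e₁ he₁)
  rw [EdgeSetConnected, connected_induce_support_iff]
  obtain ⟨e, he⟩ := hne
  refine ⟨⟨e.out.1, (mem_support_fromEdgeSet_iff hP).2 ⟨e, he, e.out_fst_mem⟩⟩,
    fun u hu v hv => ?_⟩
  obtain ⟨z, hz, hzH, huz⟩ := to_center u hu
  obtain ⟨z', hz', hz'H, hvz'⟩ := to_center v hv
  have hzz' : H.Reachable z z' := by
    rcases hz with rfl | rfl <;> rcases hz' with rfl | rfl
    exacts [.rfl, centers_reachable hzH hz'H, (centers_reachable hz'H hzH).symm, .rfl]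
  exact huz.trans (hzz'.trans hvz'.symm)

lemma edgeSetConnected_doubleStar_iff (hP : P ⊆ (doubleStar a b).edgeSet) (hne : P.Nonempty) :
    EdgeSetConnected _ P ↔
      s(inl 0, inr 0) ∈ P ∨ (∀ e ∈ P, inl 0 ∉ e) ∨ ∀ e ∈ P, inr 0 ∉ e := by
  refine ⟨fun hconn => ?_, edgeSetConnected_doubleStar hP hne⟩
  by_contra! ⟨hc, h₀, h₁⟩
  exact not_edgeSetConnected_doubleStar hP hc h₀ h₁ hconn

end Connectivity

variable (a b) in
def doubleStarCenterEdge : (doubleStar a b).edgeSet :=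
  ⟨s(inl 0, inr 0), doubleStar_adj_inl_inr⟩

lemma isShelling_doubleStar_iff
    (σ : Fin (Nat.card (doubleStar a b).edgeSet) ≃ (doubleStar a b).edgeSet) :
    IsShelling (doubleStar a b) σ ↔
      (∀ e ∈ (doubleStar a b).edgesAt (inl 0), σ.symm (doubleStarCenterEdge a b) ≤ σ.symm e) ∨
      ∀ e ∈ (doubleStar a b).edgesAt (inr 0), σ.symm (doubleStarCenterEdge a b) ≤ σ.symm e := by
  rw [IsShelling, ← forall_le_or_lt_or_lt_iff]
  refine forall_congr' fun k => ?_
  have mem_prefix : ∀ e : (doubleStar a b).edgeSet,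
      e.1 ∈ {e | ∃ i, i ≤ k ∧ (σ i).1 = e} ↔ σ.symm e ≤ k := fun e =>
    ⟨fun ⟨i, hik, hi⟩ => by rwa [← Subtype.ext hi, σ.symm_apply_apply], fun h =>
      ⟨σ.symm e, h, by rw [σ.apply_symm_apply]⟩⟩
  have forall_prefix : ∀ v, (∀ e ∈ {e | ∃ i, i ≤ k ∧ (σ i).1 = e}, v ∉ e) ↔
      ∀ e ∈ (doubleStar a b).edgesAt v, k < σ.symm e := fun v => by
    refine ⟨fun h e he => not_le.1 fun hek => h _ ((mem_prefix e).2 hek) he, ?_⟩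
    rintro h _ ⟨i, hik, rfl⟩ hv
    exact (h (σ i) hv).not_ge (by rwa [σ.symm_apply_apply])
  refine (edgeSetConnected_doubleStar_iff ?_ ?_).trans ?_
  · rintro _ ⟨i, -, rfl⟩
    exact (σ i).2
  · exact ⟨_, k, le_rfl, rfl⟩
  · rw [forall_prefix, forall_prefix]
    exact or_congr_left (mem_prefix (doubleStarCenterEdge a b))

lemma doubleStar_edgesAt_union :
    (doubleStar a b).edgesAt (inl 0) ∪ (doubleStar a b).edgesAt (inr 0) = Set.univ := by
  refine Set.eq_univ_of_forall fun ⟨e, he⟩ => ?_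
  induction e using Sym2.ind
  exact doubleStar_center_mem_of_adj he

lemma doubleStar_edgesAt_inter :
    (doubleStar a b).edgesAt (inl 0) ∩ (doubleStar a b).edgesAt (inr 0) =
      {doubleStarCenterEdge a b} := by
  ext e
  exact (Sym2.mem_and_mem_iff inl_ne_inr).trans
    (Subtype.ext_iff (a2 := doubleStarCenterEdge a b)).symm

lemma doubleStar_card_edgeSet : Nat.card (doubleStar a b).edgeSet = a + b + 1 := by
  have h := Set.ncard_union_add_ncard_inter
    ((doubleStar a b).edgesAt (inl 0)) ((doubleStar a b).edgesAt (inr 0))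
  rw [doubleStar_edgesAt_union, doubleStar_edgesAt_inter, doubleStar_ncard_edgesAt_inl,
    doubleStar_ncard_edgesAt_inr, Set.ncard_univ, Set.ncard_singleton] at h
  omega

lemma doubleStarCenterEdge_mem_edgesAt_inl :
    doubleStarCenterEdge a b ∈ (doubleStar a b).edgesAt (inl 0) :=
  Sym2.mem_mk_left _ _

lemma doubleStarCenterEdge_mem_edgesAt_inr :
    doubleStarCenterEdge a b ∈ (doubleStar a b).edgesAt (inr 0) :=
  Sym2.mem_mk_right _ _

variable (a b) in
lemma shellingCount_doubleStar_add :
    shellingCount (doubleStar a b) +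
        firstAmongCount (Fin (Nat.card (doubleStar a b).edgeSet)) (doubleStarCenterEdge a b)
          Set.univ =
      firstAmongCount (Fin (Nat.card (doubleStar a b).edgeSet)) (doubleStarCenterEdge a b)
          ((doubleStar a b).edgesAt (inl 0)) +
        firstAmongCount (Fin (Nat.card (doubleStar a b).edgeSet)) (doubleStarCenterEdge a b)
          ((doubleStar a b).edgesAt (inr 0)) := by
  rw [← doubleStar_edgesAt_union, ← card_subtype_or_add_firstAmongCount_union, shellingCount,
    Nat.card_congr (Equiv.subtypeEquivRight isShelling_doubleStar_iff)]

end DoubleStar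

/-- For the double star with center degrees `d₁, d₂ ≥ 2`,
`F(T) = ((d₁² + d₂² + d₁d₂ - d₁ - d₂)/(d₁ d₂)) (d₁ + d₂ - 2)!`
(stated multiplicatively). -/
theorem shellingCount_doubleStar (d₁ d₂ : ℕ) (h₁ : 2 ≤ d₁) (h₂ : 2 ≤ d₂) :
    d₁ * d₂ * shellingCount (doubleStar (d₁ - 1) (d₂ - 1)) =
      (d₁ ^ 2 + d₂ ^ 2 + d₁ * d₂ - d₁ - d₂) * (d₁ + d₂ - 2)! := by
  obtain ⟨a, rfl⟩ : ∃ a, d₁ = a + 1 := ⟨d₁ - 1, by omega⟩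
  obtain ⟨b, rfl⟩ : ∃ b, d₂ = b + 1 := ⟨d₂ - 1, by omega⟩
  rw [Nat.add_sub_cancel, Nat.add_sub_cancel]
  have count : ∀ {S}, doubleStarCenterEdge a b ∈ S →
      firstAmongCount (Fin _) _ S * S.ncard = (Nat.card (doubleStar a b).edgeSet)! :=
    fun hc => (firstAmongCount_mul_ncard hc).trans (Nat.card_fin_card_equiv _)
  have h₀ := count doubleStarCenterEdge_mem_edgesAt_inl
  have h₁ := count doubleStarCenterEdge_mem_edgesAt_inr
  have hU := count (Set.mem_univ _)
  have hF := shellingCount_doubleStar_add a b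
  rw [doubleStar_ncard_edgesAt_inl] at h₀
  rw [doubleStar_ncard_edgesAt_inr] at h₁
  rw [Set.ncard_univ] at hU
  rw [doubleStar_card_edgeSet] at h₀ h₁ hU hF
  rw [Nat.factorial_succ] at h₀ h₁ hU
  have hNU := Nat.eq_of_mul_eq_mul_left (Nat.succ_pos _) ((mul_comm _ _).trans hU)
  rw [show a + 1 + (b + 1) - 2 = a + b by omega, Nat.sub_sub,
    Nat.sub_eq_of_eq_add (show (a + 1) ^ 2 + (b + 1) ^ 2 + (a + 1) * (b + 1) =
      a ^ 2 + b ^ 2 + a * b + 2 * a + 2 * b + 1 + (a + 1 + (b + 1)) by ring)]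
  zify at *
  linear_combination
    (↑a + 1) * (↑b + 1) * hF + (↑b + 1) * h₀ + (↑a + 1) * h₁ - (↑a + 1) * (↑b + 1) * hNU
end

section
/- Let s_1 ≤ s_2 ≤ ... ≤ s_{d-1} and d ≥ 3 be positive integers. Then C(s_1 + s_2 + ... + s_{d-1}, s_1) < 2^{s_1 - 1} · d if and only if s_1 = s_2 = ... = s_{d-1} = 1. -/
open SimpleGraph Finset Nat

lemma choose_aux : ∀ a : ℕ, 1 ≤ a → ∀ S : ℕ, 2 * a ≤ S →
    2 ^ (a - 1) * (S - a + 1) ≤ S.choose a := by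
  intro a ha
  induction a, ha using Nat.le_induction with
  | base =>
    intro S hS
    simp only [Nat.choose_one_right]
    omega
  | succ a ha ih =>
    intro S hS
    obtain ⟨T, rfl⟩ : ∃ T, S = T + 1 := ⟨S - 1, by omega⟩
    have h1 : 2 ^ (a - 1) * (T - a + 1) ≤ T.choose a := ih T (by omega)
    have h2 : T.choose a ≤ T.choose (a + 1) := by
      have h3 := Nat.choose_succ_right_eq T a
      have h4 : a + 1 ≤ T - a := by omega
      have h5 : T.choose a * (a + 1) ≤ T.choose (a + 1) * (a + 1) := by
        rw [h3]; exact Nat.mul_le_mul_left _ h4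
      exact Nat.le_of_mul_le_mul_right h5 (by omega)
    have h6 : (T + 1).choose (a + 1) = T.choose a + T.choose (a + 1) :=
      Nat.choose_succ_succ T a
    have h7 : 2 * T.choose a ≤ (T + 1).choose (a + 1) := by omega
    have h8 : 2 ^ ((a + 1) - 1) = 2 * 2 ^ (a - 1) := by
      obtain ⟨b, rfl⟩ : ∃ b, a = b + 1 := ⟨a - 1, by omega⟩
      simp [pow_succ, Nat.mul_comm]
    rw [h8]
    have : (T + 1) - (a + 1) + 1 = T - a + 1 := by omega
    rw [this]
    calc 2 * 2 ^ (a - 1) * (T - a + 1) = 2 * (2 ^ (a - 1) * (T - a + 1)) := by ring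
    _ ≤ 2 * T.choose a := by omega
    _ ≤ (T + 1).choose (a + 1) := h7

/-- For positive integers `s_1 ≤ s_2 ≤ ⋯ ≤ s_{d-1}` and `d ≥ 3`,
`C(s_1 + ⋯ + s_{d-1}, s_1) < 2^(s_1 - 1) d` iff all `s_i = 1`. -/
theorem choose_lt_iff_all_one (d : ℕ) (hd : 3 ≤ d) (s : Fin (d - 1) → ℕ)
    (hpos : ∀ i, 0 < s i) (hmono : Monotone s) :
    (∑ i, s i).choose (s ⟨0, by omega⟩) < 2 ^ (s ⟨0, by omega⟩ - 1) * d ↔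
      ∀ i, s i = 1 := by
  constructor
  · intro hlt
    by_contra hne
    push_neg at hne
    set a := s ⟨0, by omega⟩ with ha
    have hmin : ∀ i, a ≤ s i := fun i => hmono (Fin.le_def.mpr (Nat.zero_le _))
    have ha1 : 1 ≤ a := hpos _
    have hn2 : 2 ≤ d - 1 := by omega
    have hsum : (d - 1) * a ≤ ∑ i, s i := by
      calc (d - 1) * a = ∑ _i : Fin (d - 1), a := by simp [mul_comm]
      _ ≤ ∑ i, s i := Finset.sum_le_sum fun i _ => hmin i
    have hS : a + (d - 1) ≤ ∑ i, s i := by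
      rcases Nat.lt_or_ge a 2 with h | h
      · have ha1' : a = 1 := by omega
        obtain ⟨j, hj⟩ := hne
        have hlt2 : ∑ _i : Fin (d - 1), 1 < ∑ i, s i :=
          Finset.sum_lt_sum (fun i _ => hpos i)
            ⟨j, Finset.mem_univ j, by have := hpos j; omega⟩
        simp at hlt2
        omega
      · have : a + (d - 1) ≤ (d - 1) * a := by nlinarith
        omega
    have h2a : 2 * a ≤ ∑ i, s i := by nlinarith
    have hkey := choose_aux a ha1 (∑ i, s i) h2a
    have : 2 ^ (a - 1) * d ≤ 2 ^ (a - 1) * (∑ i, s i - a + 1) := by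
      apply Nat.mul_le_mul_left
      omega
    omega
  · intro h
    simp only [h]
    have hsum : ∑ _i : Fin (d - 1), 1 = d - 1 := by simp
    rw [hsum, Nat.choose_one_right]
    simp
    omega
end
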